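/- arXiv:2602.17844 — 4 statements merged into one kernel-verified Lean document; each statement's English description precedes it below -/
import Mathlib

section
/- Let X be a real Hilbert space and A the generator of a strongly continuous group (e^{sA})_{s∈ℝ} of bounded operators on X satisfying ‖e^{sA}‖ ≤ M e^{λs} for all s ≥ 0. For any ω > λ, the bilinear form ⟨Lu, v⟩ = ∫_0^∞ e^{-2ωs} ⟨e^{sA}u, e^{sA}v⟩ ds defines a bounded symmetric linear operator L with ‖L‖ ≤ M²/(2(ω−λ)); moreover ⟨Lu,u⟩ ≥ (∫_0^1 e^{-2ωs} ds) · (sup_{s∈[0,1]} ‖e^{-sA}‖)^{-2} ‖u‖² for all u ∈ X, and for every u in the domain of A one has ⟨LAu, u⟩ = −(1/2)‖u‖² + ω⟨Lu,u⟩. -/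
open MeasureTheory Real
open scoped RealInnerProductSpace

lemma aux_exp_hasDerivAt (b x : ℝ) (hb : b ≠ 0) :
    HasDerivAt (fun s => -(Real.exp (-b * s)) / b) (Real.exp (-b * x)) x := by
  have h1 : HasDerivAt (fun s : ℝ => -b * s) (-b) x := by
    simpa using (hasDerivAt_id x).const_mul (-b)
  have h2 : HasDerivAt (fun s => Real.exp (-b * s)) (Real.exp (-b * x) * (-b)) x :=
    (Real.hasDerivAt_exp (-b * x)).comp x h1
  have h3 := (h2.neg).div_const b
  refine h3.congr_deriv ?_
  rw [mul_neg, neg_neg, mul_div_assoc, div_self hb, mul_one]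

lemma aux_exp_tendsto {b : ℝ} (hb : 0 < b) :
    Filter.Tendsto (fun s : ℝ => Real.exp (-b * s)) Filter.atTop (nhds 0) := by
  have h := Real.tendsto_exp_neg_atTop_nhds_zero.comp
    (Filter.Tendsto.const_mul_atTop hb (Filter.tendsto_id (α := ℝ)))
  refine h.congr fun s => ?_
  simp [Function.comp, neg_mul]

lemma aux_exp_integral {b : ℝ} (hb : 0 < b) :
    ∫ s in Set.Ioi (0:ℝ), Real.exp (-b * s) = 1 / b := by
  have htend : Filter.Tendsto (fun s => -(Real.exp (-b * s)) / b) Filter.atTop (nhds 0) := by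
    simpa using ((aux_exp_tendsto hb).neg).div_const b
  have h := integral_Ioi_of_hasDerivAt_of_tendsto'
    (fun x _ => aux_exp_hasDerivAt b x hb.ne') (exp_neg_integrableOn_Ioi 0 hb) htend
  rw [h, mul_zero, Real.exp_zero]
  field_simp
  ring

/-- the Lyapunov quadratic form `⟨Lu,v⟩ = ∫₀^∞ e^{-2ωs}⟨e^{sA}u, e^{sA}v⟩ ds`
associated to a strongly continuous group with growth rate `λ` and `ω > λ`. -/
theorem stmt0
    {X : Type*} [NormedAddCommGroup X] [InnerProductSpace ℝ X] [CompleteSpace X]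
    (T : ℝ → X →L[ℝ] X)
    (hT0 : T 0 = ContinuousLinearMap.id ℝ X)
    (hTadd : ∀ s t : ℝ, T (s + t) = (T s).comp (T t))
    (hTcont : ∀ u : X, Continuous fun s => T s u)
    (M lam ω : ℝ) (hM : 1 ≤ M)
    (hbound : ∀ s : ℝ, 0 ≤ s → ‖T s‖ ≤ M * Real.exp (lam * s))
    (hω : lam < ω) :
    ∃ L : X →L[ℝ] X,
      (∀ u v : X, ⟪L u, v⟫ = ∫ s in Set.Ioi (0:ℝ),
          Real.exp (-2 * ω * s) * ⟪T s u, T s v⟫) ∧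
      ‖L‖ ≤ M ^ 2 / (2 * (ω - lam)) ∧
      (∀ u v : X, ⟪L u, v⟫ = ⟪u, L v⟫) ∧
      (∀ u : X, (∫ s in (0:ℝ)..1, Real.exp (-2 * ω * s)) *
          ((⨆ s ∈ Set.Icc (0:ℝ) 1, ‖T (-s)‖) ^ 2)⁻¹ * ‖u‖ ^ 2 ≤ ⟪L u, u⟫) ∧
      (∀ u v : X, HasDerivAt (fun s => T s u) v 0 →
          ⟪L v, u⟫ = -(1/2) * ‖u‖ ^ 2 + ω * ⟪L u, u⟫) := by
  have hwl : 0 < ω - lam := sub_pos.2 hω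
  have hb : 0 < 2 * (ω - lam) := by positivity
  set C : ℝ := M ^ 2 / (2 * (ω - lam)) with hCdef
  have hM0 : 0 < M := lt_of_lt_of_le one_pos hM
  have hC0 : 0 ≤ C := by positivity
  -- continuity of the integrand
  have hcont : ∀ u v : X, Continuous fun s => Real.exp (-2 * ω * s) * ⟪T s u, T s v⟫ := by
    intro u v
    exact (Real.continuous_exp.comp (continuous_const.mul continuous_id)).mul
      ((hTcont u).inner (hTcont v))
  -- pointwise bound
  have hptbd : ∀ u v : X, ∀ s : ℝ, 0 ≤ s →
      ‖Real.exp (-2 * ω * s) * ⟪T s u, T s v⟫‖ ≤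
        M ^ 2 * ‖u‖ * ‖v‖ * Real.exp (-(2 * (ω - lam)) * s) := by
    intro u v s hs
    have hTu : ‖T s u‖ ≤ M * Real.exp (lam * s) * ‖u‖ :=
      le_trans ((T s).le_opNorm u) (by gcongr; exact hbound s hs)
    have hTv : ‖T s v‖ ≤ M * Real.exp (lam * s) * ‖v‖ :=
      le_trans ((T s).le_opNorm v) (by gcongr; exact hbound s hs)
    have h1 : |⟪T s u, T s v⟫| ≤ (M * Real.exp (lam * s) * ‖u‖) * (M * Real.exp (lam * s) * ‖v‖) :=
      le_trans (abs_real_inner_le_norm _ _) (by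
        have h0u : (0:ℝ) ≤ ‖T s u‖ := norm_nonneg _
        exact mul_le_mul hTu hTv (norm_nonneg _) (by positivity))
    have hexp : (0:ℝ) < Real.exp (-2 * ω * s) := Real.exp_pos _
    rw [norm_mul, Real.norm_eq_abs, Real.norm_eq_abs, Real.abs_exp]
    calc Real.exp (-2 * ω * s) * |⟪T s u, T s v⟫|
        ≤ Real.exp (-2 * ω * s) * ((M * Real.exp (lam * s) * ‖u‖) * (M * Real.exp (lam * s) * ‖v‖)) := by
          exact mul_le_mul_of_nonneg_left h1 hexp.le
      _ = M ^ 2 * ‖u‖ * ‖v‖ * (Real.exp (-2 * ω * s) * (Real.exp (lam * s) * Real.exp (lam * s))) := by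
          ring
      _ = M ^ 2 * ‖u‖ * ‖v‖ * Real.exp (-(2 * (ω - lam)) * s) := by
          rw [← Real.exp_add, ← Real.exp_add]; congr 1; ring
  -- integrability of the integrand
  have hint : ∀ u v : X, IntegrableOn
      (fun s => Real.exp (-2 * ω * s) * ⟪T s u, T s v⟫) (Set.Ioi (0:ℝ)) := by
    intro u v
    refine Integrable.mono' ((exp_neg_integrableOn_Ioi 0 hb).const_mul (M ^ 2 * ‖u‖ * ‖v‖))
      ((hcont u v).aestronglyMeasurable.restrict) ?_
    filter_upwards [ae_restrict_mem measurableSet_Ioi] with s hs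
    simpa [mul_assoc] using hptbd u v s (le_of_lt hs)
  -- the bilinear form
  set B : X → X → ℝ :=
    fun u v => ∫ s in Set.Ioi (0:ℝ), Real.exp (-2 * ω * s) * ⟪T s u, T s v⟫ with hBdef
  have hBbd : ∀ u v : X, |B u v| ≤ C * ‖u‖ * ‖v‖ := by
    intro u v
    have h1 : |B u v| ≤ ∫ s in Set.Ioi (0:ℝ),
        M ^ 2 * ‖u‖ * ‖v‖ * Real.exp (-(2 * (ω - lam)) * s) := by
      rw [← Real.norm_eq_abs]
      refine (norm_integral_le_integral_norm _).trans ?_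
      refine setIntegral_mono_on ((hint u v).norm)
        ((exp_neg_integrableOn_Ioi 0 hb).const_mul _) measurableSet_Ioi ?_
      intro s hs
      exact hptbd u v s (le_of_lt hs)
    rw [integral_const_mul, aux_exp_integral hb] at h1
    calc |B u v| ≤ M ^ 2 * ‖u‖ * ‖v‖ * (1 / (2 * (ω - lam))) := h1
      _ = C * ‖u‖ * ‖v‖ := by rw [hCdef]; ring
  -- additivity in the first argument
  have hBadd : ∀ u u' v : X, B (u + u') v = B u v + B u' v := by
    intro u u' v
    have heq : (fun s => Real.exp (-2 * ω * s) * ⟪T s (u + u'), T s v⟫)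
        = fun s => Real.exp (-2 * ω * s) * ⟪T s u, T s v⟫
            + Real.exp (-2 * ω * s) * ⟪T s u', T s v⟫ := by
      funext s; rw [map_add, inner_add_left, mul_add]
    rw [hBdef]
    simp only [heq]
    exact integral_add (hint u v) (hint u' v)
  have hBsmul : ∀ (c : ℝ) (u v : X), B (c • u) v = c * B u v := by
    intro c u v
    have heq : (fun s => Real.exp (-2 * ω * s) * ⟪T s (c • u), T s v⟫)
        = fun s => c * (Real.exp (-2 * ω * s) * ⟪T s u, T s v⟫) := by
      funext s; rw [ContinuousLinearMap.map_smul, real_inner_smul_left]; ring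
    rw [hBdef]
    simp only [heq]
    exact integral_const_mul c _
  have hBsymm : ∀ u v : X, B u v = B v u := by
    intro u v
    rw [hBdef]
    simp only [real_inner_comm]
  -- the functional ψ u
  let ψ : X → (X →L[ℝ] ℝ) := fun u => LinearMap.mkContinuous
    { toFun := fun v => B u v
      map_add' := fun v w => by
        show B u (v + w) = B u v + B u w
        rw [hBsymm u (v + w), hBadd v w u, hBsymm v u, hBsymm w u]
      map_smul' := fun c v => by
        show B u (c • v) = c * B u v
        rw [hBsymm u (c • v), hBsmul c v u, hBsymm v u] }
    (C * ‖u‖)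
    (fun v => by
      simp only [LinearMap.coe_mk, AddHom.coe_mk, Real.norm_eq_abs]
      calc |B u v| ≤ C * ‖u‖ * ‖v‖ := hBbd u v
        _ = C * ‖u‖ * ‖v‖ := rfl)
  have hψ_apply : ∀ u v : X, ψ u v = B u v := fun u v => rfl
  have hψadd : ∀ u u' : X, ψ (u + u') = ψ u + ψ u' := by
    intro u u'
    ext v
    simp only [ContinuousLinearMap.add_apply, hψ_apply]
    exact hBadd u u' v
  have hψsmul : ∀ (c : ℝ) (u : X), ψ (c • u) = c • ψ u := by
    intro c u
    ext v
    simp only [ContinuousLinearMap.coe_smul', Pi.smul_apply, smul_eq_mul, hψ_apply]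
    exact hBsmul c u v
  let L0 : X →ₗ[ℝ] X :=
    { toFun := fun u => (InnerProductSpace.toDual ℝ X).symm (ψ u)
      map_add' := fun u u' => by
        show (InnerProductSpace.toDual ℝ X).symm (ψ (u + u'))
          = (InnerProductSpace.toDual ℝ X).symm (ψ u) + (InnerProductSpace.toDual ℝ X).symm (ψ u')
        rw [hψadd]; exact map_add _ _ _
      map_smul' := fun c u => by
        show (InnerProductSpace.toDual ℝ X).symm (ψ (c • u))
          = c • (InnerProductSpace.toDual ℝ X).symm (ψ u)
        rw [hψsmul]; exact map_smul _ _ _ }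
  have hL0inner : ∀ u v : X, ⟪L0 u, v⟫ = B u v := by
    intro u v
    exact InnerProductSpace.toDual_symm_apply
  have hL0norm : ∀ u : X, ‖L0 u‖ ≤ C * ‖u‖ := by
    intro u
    have h1 : ‖L0 u‖ = ‖ψ u‖ := by
      show ‖(InnerProductSpace.toDual ℝ X).symm (ψ u)‖ = ‖ψ u‖
      exact LinearIsometryEquiv.norm_map _ _
    rw [h1]
    exact LinearMap.mkContinuous_norm_le _ (mul_nonneg hC0 (norm_nonneg u)) _
  let L : X →L[ℝ] X := L0.mkContinuous C (fun u => by
    calc ‖L0 u‖ ≤ C * ‖u‖ := hL0norm u)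
  have hLinner : ∀ u v : X, ⟪L u, v⟫ = B u v := fun u v => hL0inner u v
  refine ⟨L, fun u v => hLinner u v, ?_, ?_, ?_, ?_⟩
  · exact LinearMap.mkContinuous_norm_le _ hC0 _
  · intro u v
    rw [hLinner u v, hBsymm u v, ← hLinner v u, real_inner_comm]
  · -- coercivity
    intro u
    rw [hLinner u u]
    have hnonneg : 0 ≤ B u u := by
      rw [hBdef]
      refine setIntegral_nonneg measurableSet_Ioi fun s _ => ?_
      exact mul_nonneg (Real.exp_pos _).le real_inner_self_nonneg
    rcases subsingleton_or_nontrivial X with hX | hX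
    · have hu : ‖u‖ = 0 := by simp [Subsingleton.elim u 0]
      rw [hu]
      simpa using hnonneg
    · -- the sup is bounded and at least 1
      obtain ⟨C', hC'⟩ : ∃ C', ∀ s : Set.Icc (0:ℝ) 1, ‖T (-(s:ℝ))‖ ≤ C' := by
        apply banach_steinhaus (g := fun s : Set.Icc (0:ℝ) 1 => T (-(s:ℝ)))
        intro x
        have hc : Continuous fun s : ℝ => ‖T (-s) x‖ :=
          ((hTcont x).comp continuous_neg).norm
        obtain ⟨Cx, hCx⟩ := (isCompact_Icc (a := (0:ℝ)) (b := 1)).exists_bound_of_continuousOn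
          (((hTcont x).comp continuous_neg).continuousOn)
        exact ⟨Cx, fun s => hCx s s.2⟩
      set K : ℝ := ⨆ s ∈ Set.Icc (0:ℝ) 1, ‖T (-s)‖ with hKdef
      have hbdd : BddAbove (Set.range fun s : ℝ => ⨆ _ : s ∈ Set.Icc (0:ℝ) 1, ‖T (-s)‖) := by
        refine ⟨max C' 0, ?_⟩
        rintro _ ⟨s, rfl⟩
        dsimp only
        by_cases hs : s ∈ Set.Icc (0:ℝ) 1
        · rw [ciSup_pos hs]
          exact le_trans (hC' ⟨s, hs⟩) (le_max_left _ _)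
        · haveI : IsEmpty (s ∈ Set.Icc (0:ℝ) 1) := ⟨hs⟩
          rw [Real.iSup_of_isEmpty]
          exact le_max_right _ _
      have hKge : ∀ s ∈ Set.Icc (0:ℝ) 1, ‖T (-s)‖ ≤ K := by
        intro s hs
        rw [hKdef]
        refine le_trans ?_ (le_ciSup hbdd s)
        rw [ciSup_pos hs]
      have hK1 : (1:ℝ) ≤ K := by
        have h0 : ‖T (-(0:ℝ))‖ = 1 := by rw [neg_zero, hT0]; exact ContinuousLinearMap.norm_id
        have := hKge 0 (by constructor <;> norm_num)
        rw [h0] at this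
        exact this
      have hK0 : 0 < K := lt_of_lt_of_le one_pos hK1
      -- key lower bound for ‖T s u‖ on [0,1]
      have hkey : ∀ s ∈ Set.Icc (0:ℝ) 1, (K ^ 2)⁻¹ * ‖u‖ ^ 2 ≤ ⟪T s u, T s u⟫ := by
        intro s hs
        rw [real_inner_self_eq_norm_sq]
        have hid : T (-s) (T s u) = u := by
          have h1 := hTadd (-s) s
          rw [neg_add_cancel, hT0] at h1
          calc T (-s) (T s u) = ((T (-s)).comp (T s)) u := rfl
            _ = u := by rw [← h1]; rfl
        have h2 : ‖u‖ ≤ K * ‖T s u‖ := by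
          calc ‖u‖ = ‖T (-s) (T s u)‖ := by rw [hid]
            _ ≤ ‖T (-s)‖ * ‖T s u‖ := (T (-s)).le_opNorm _
            _ ≤ K * ‖T s u‖ := by gcongr; exact hKge s hs
        have h3 : ‖u‖ ^ 2 ≤ K ^ 2 * ‖T s u‖ ^ 2 := by
          calc ‖u‖ ^ 2 ≤ (K * ‖T s u‖) ^ 2 := pow_le_pow_left₀ (norm_nonneg u) h2 2
            _ = K ^ 2 * ‖T s u‖ ^ 2 := by ring
        rw [inv_mul_le_iff₀ (by positivity)]
        linarith
      -- compare integrals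
      have hmono1 : ∫ s in Set.Ioc (0:ℝ) 1, Real.exp (-2 * ω * s) * ⟪T s u, T s u⟫ ≤ B u u := by
        rw [hBdef]
        refine setIntegral_mono_set (hint u u) ?_ ?_
        · filter_upwards [ae_restrict_mem measurableSet_Ioi] with s _
          exact mul_nonneg (Real.exp_pos _).le real_inner_self_nonneg
        · exact HasSubset.Subset.eventuallyLE Set.Ioc_subset_Ioi_self
      have hmono2 : ∫ s in Set.Ioc (0:ℝ) 1, Real.exp (-2 * ω * s) * ((K ^ 2)⁻¹ * ‖u‖ ^ 2)
          ≤ ∫ s in Set.Ioc (0:ℝ) 1, Real.exp (-2 * ω * s) * ⟪T s u, T s u⟫ := by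
        refine setIntegral_mono_on ?_ ?_ measurableSet_Ioc ?_
        · exact ((Real.continuous_exp.comp (continuous_const.mul continuous_id)).mul
            continuous_const).integrableOn_Ioc
        · exact (hcont u u).integrableOn_Ioc
        · intro s hs
          exact mul_le_mul_of_nonneg_left
            (hkey s ⟨le_of_lt hs.1, hs.2⟩) (Real.exp_pos _).le
      have heval : ∫ s in Set.Ioc (0:ℝ) 1, Real.exp (-2 * ω * s) * ((K ^ 2)⁻¹ * ‖u‖ ^ 2)
          = (∫ s in (0:ℝ)..1, Real.exp (-2 * ω * s)) * ((K ^ 2)⁻¹) * ‖u‖ ^ 2 := by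
        rw [intervalIntegral.integral_of_le (by norm_num : (0:ℝ) ≤ 1)]
        rw [integral_mul_const]
        ring
      calc (∫ s in (0:ℝ)..1, Real.exp (-2 * ω * s)) * ((K ^ 2)⁻¹) * ‖u‖ ^ 2
          = ∫ s in Set.Ioc (0:ℝ) 1, Real.exp (-2 * ω * s) * ((K ^ 2)⁻¹ * ‖u‖ ^ 2) := heval.symm
        _ ≤ ∫ s in Set.Ioc (0:ℝ) 1, Real.exp (-2 * ω * s) * ⟪T s u, T s u⟫ := hmono2
        _ ≤ B u u := hmono1
  · -- derivative identity
    intro u v hv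
    -- derivative of s ↦ T s u at every point
    have hTu_deriv : ∀ s : ℝ, HasDerivAt (fun t => T t u) (T s v) s := by
      intro s
      have h1 : HasDerivAt (fun t : ℝ => T s (T t u)) (T s v) 0 :=
        ((T s).hasFDerivAt.comp_hasDerivAt 0 hv)
      have h2 : HasDerivAt (fun t : ℝ => T (s + t) u) (T s v) 0 := by
        refine h1.congr_of_eventuallyEq (Filter.Eventually.of_forall fun t => ?_)
        show T (s + t) u = T s (T t u)
        rw [hTadd s t]; rfl
      have h3 : HasDerivAt (fun t : ℝ => t - s) 1 s := by
        simpa using (hasDerivAt_id s).sub_const s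
      have h4 := HasDerivAt.scomp_of_eq s h2 h3 (sub_self s).symm
      rw [one_smul] at h4
      refine h4.congr_of_eventuallyEq (Filter.Eventually.of_forall fun t => ?_)
      show T t u = ((fun t : ℝ => T (s + t) u) ∘ fun t => t - s) t
      simp [Function.comp]
    -- the function F and its derivative
    set F : ℝ → ℝ := fun s => Real.exp (-2 * ω * s) * ⟪T s u, T s u⟫ with hFdef
    set F' : ℝ → ℝ := fun s => -(2 * ω) * (Real.exp (-2 * ω * s) * ⟪T s u, T s u⟫)
      + (Real.exp (-2 * ω * s) * ⟪T s v, T s u⟫ + Real.exp (-2 * ω * s) * ⟪T s u, T s v⟫)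
      with hF'def
    have hFderiv : ∀ s : ℝ, HasDerivAt F (F' s) s := by
      intro s
      have hexp : HasDerivAt (fun t : ℝ => Real.exp (-2 * ω * t))
          (Real.exp (-2 * ω * s) * (-2 * ω)) s := by
        have h1 : HasDerivAt (fun t : ℝ => -2 * ω * t) (-2 * ω) s := by
          simpa using (hasDerivAt_id s).const_mul (-2 * ω)
        exact (Real.hasDerivAt_exp (-2 * ω * s)).comp s h1
      have hinner : HasDerivAt (fun t => ⟪T t u, T t u⟫)
          (⟪T s u, T s v⟫ + ⟪T s v, T s u⟫) s :=
        HasDerivAt.inner ℝ (hTu_deriv s) (hTu_deriv s)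
      have h := hexp.mul hinner
      refine h.congr_deriv ?_
      simp only [hF'def]
      ring
    -- integrability of F'
    have hF'int : IntegrableOn F' (Set.Ioi (0:ℝ)) := by
      rw [hF'def]
      exact (((hint u u).const_mul _).add ((hint v u).add (hint u v)))
    -- F tends to 0 at infinity
    have hFtend : Filter.Tendsto F Filter.atTop (nhds 0) := by
      refine squeeze_zero_norm'
        (a := fun s : ℝ => M ^ 2 * ‖u‖ * ‖u‖ * Real.exp (-(2 * (ω - lam)) * s)) ?_ ?_
      · filter_upwards [Filter.eventually_ge_atTop (0:ℝ)] with s hs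
        exact hptbd u u s hs
      · have := (aux_exp_tendsto (b := 2 * (ω - lam)) hb).const_mul (M ^ 2 * ‖u‖ * ‖u‖)
        simpa using this
    -- FTC
    have hFTC : ∫ s in Set.Ioi (0:ℝ), F' s = 0 - F 0 :=
      integral_Ioi_of_hasDerivAt_of_tendsto' (fun s _ => hFderiv s) hF'int hFtend
    have hF0 : F 0 = ‖u‖ ^ 2 := by
      rw [hFdef]
      simp [hT0, real_inner_self_eq_norm_sq]
    -- split the integral of F'
    have hsplit : ∫ s in Set.Ioi (0:ℝ), F' s = -(2 * ω) * B u u + (B v u + B u v) := by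
      have hadd1 : IntegrableOn (fun s => Real.exp (-2 * ω * s) * ⟪T s v, T s u⟫
          + Real.exp (-2 * ω * s) * ⟪T s u, T s v⟫) (Set.Ioi (0:ℝ)) := (hint v u).add (hint u v)
      have hcm : IntegrableOn (fun s => -(2 * ω) * (Real.exp (-2 * ω * s) * ⟪T s u, T s u⟫))
          (Set.Ioi (0:ℝ)) := (hint u u).const_mul _
      simp only [hF'def, hBdef]
      rw [integral_add hcm hadd1, integral_add (hint v u) (hint u v), integral_const_mul]
    have hBvu : B v u = B u v := hBsymm v u
    rw [hsplit, hF0] at hFTC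
    rw [hLinner v u, hLinner u u]
    rw [hBvu] at hFTC
    linarith
end

section
/- Let X be a real Hilbert space and L: [T₀,T₁] → L(X, X*) a C¹ family of symmetric operators with C_L⁻¹‖v‖ ≤ ⟨L(t)v,v⟩^{1/2} ≤ C_L‖v‖ for all v and t. Then the quantity l(t₀,t₁) (the supremum over partitions and vectors of the product ∏_j |v_j|_{L(s_j)}/|v_j|_{L(s_{j−1})}) satisfies l(t₀,t₁) ≤ exp( (1/2) ∫_{t₀}^{t₁} sup_{v≠0} ⟨L'(τ)v, v⟩ / ⟨L(τ)v, v⟩ dτ ) ≤ exp( (1/2) C_L² ∫_{t₀}^{t₁} ‖L'(τ)‖ dτ ). -/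
open scoped RealInnerProductSpace

/-- The set of products `∏_{j=1}^{j₀} |v_j|_{L(s_j)}/|v_j|_{L(s_{j-1})}` over all finite
partitions `t₀ = s₀ ≤ s₁ ≤ … ≤ s_{j₀} = t₁` and nonzero vectors `v₁, …, v_{j₀}`. -/
noncomputable def lProdSet {X : Type*} [NormedAddCommGroup X] [InnerProductSpace ℝ X]
    (L : ℝ → X →L[ℝ] X) (t₀ t₁ : ℝ) : Set ℝ :=
  { x | ∃ (j₀ : ℕ) (s : ℕ → ℝ) (v : ℕ → X), 1 ≤ j₀ ∧ s 0 = t₀ ∧ s j₀ = t₁ ∧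
      (∀ j < j₀, s j ≤ s (j + 1)) ∧ (∀ j, 1 ≤ j → j ≤ j₀ → v j ≠ 0) ∧
      x = ∏ j ∈ Finset.Icc 1 j₀,
        Real.sqrt ⟪L (s j) (v j), v j⟫ / Real.sqrt ⟪L (s (j - 1)) (v j), v j⟫ }

lemma ratio_sub_le {a b c d e A B D : ℝ} (he : 0 < e) (hb : e ≤ b) (hd : e ≤ d)
    (hac : |a - c| ≤ A) (hc : |c| ≤ B) (hdb : |d - b| ≤ D) :
    a / b - c / d ≤ A / e + B * D / (e * e) := by
  have hb0 : 0 < b := lt_of_lt_of_le he hb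
  have hd0 : 0 < d := lt_of_lt_of_le he hd
  have key : a / b - c / d = (a - c) / b + (c * (d - b)) / (b * d) := by
    field_simp; ring
  rw [key]
  have hA0 : 0 ≤ A := le_trans (abs_nonneg _) hac
  have hB0 : 0 ≤ B := le_trans (abs_nonneg _) hc
  have hD0 : 0 ≤ D := le_trans (abs_nonneg _) hdb
  have h1 : (a - c) / b ≤ A / e :=
    div_le_div₀ hA0 (le_trans (le_abs_self _) hac) he hb
  have h2 : c * (d - b) / (b * d) ≤ B * D / (e * e) := by
    apply div_le_div₀ (mul_nonneg hB0 hD0)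
      (le_trans (le_abs_self _) (by rw [abs_mul]; exact mul_le_mul hc hdb (abs_nonneg _) hB0))
      (by positivity) (mul_le_mul hb hd he.le hb0.le)
  linarith

/-- for a `C¹` family of symmetric, uniformly coercive and bounded forms `L(t)`,
the quantity `l(t₀,t₁)` is bounded by
`exp((1/2)∫_{t₀}^{t₁} sup_{v≠0} ⟨L'(τ)v,v⟩/⟨L(τ)v,v⟩ dτ) ≤ exp((1/2)C_L²∫_{t₀}^{t₁}‖L'(τ)‖ dτ)`. -/
theorem stmt2 {X : Type*} [NormedAddCommGroup X] [InnerProductSpace ℝ X]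
    (T₀ T₁ : ℝ) (L L' : ℝ → X →L[ℝ] X) (CL : ℝ) (hCL : 1 ≤ CL)
    (hderiv : ∀ t ∈ Set.Icc T₀ T₁, HasDerivAt L (L' t) t)
    (hderivCont : ContinuousOn L' (Set.Icc T₀ T₁))
    (hsym : ∀ t ∈ Set.Icc T₀ T₁, ∀ v w : X, ⟪L t v, w⟫ = ⟪v, L t w⟫)
    (hlow : ∀ t ∈ Set.Icc T₀ T₁, ∀ v : X, CL⁻¹ * ‖v‖ ≤ Real.sqrt ⟪L t v, v⟫)
    (hupp : ∀ t ∈ Set.Icc T₀ T₁, ∀ v : X, Real.sqrt ⟪L t v, v⟫ ≤ CL * ‖v‖) :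
    ∀ t₀ t₁ : ℝ, T₀ ≤ t₀ → t₀ ≤ t₁ → t₁ ≤ T₁ →
      sSup (lProdSet L t₀ t₁) ≤
        Real.exp ((1/2) * ∫ τ in t₀..t₁,
          sSup {r : ℝ | ∃ v : X, v ≠ 0 ∧ r = ⟪L' τ v, v⟫ / ⟪L τ v, v⟫}) ∧
      Real.exp ((1/2) * ∫ τ in t₀..t₁,
          sSup {r : ℝ | ∃ v : X, v ≠ 0 ∧ r = ⟪L' τ v, v⟫ / ⟪L τ v, v⟫}) ≤
        Real.exp ((1/2) * CL ^ 2 * ∫ τ in t₀..t₁, ‖L' τ‖) := by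
  intro t₀ t₁ hT₀ h01 hT₁
  have hCL0 : 0 < CL := lt_of_lt_of_le one_pos hCL
  set g : ℝ → ℝ :=
    fun τ => sSup {r : ℝ | ∃ v : X, v ≠ 0 ∧ r = ⟪L' τ v, v⟫ / ⟪L τ v, v⟫} with hgdef
  -- basic facts
  have hqpos : ∀ t ∈ Set.Icc T₀ T₁, ∀ v : X, v ≠ 0 → 0 < ⟪L t v, v⟫ := by
    intro t ht v hv
    have h1 := hlow t ht v
    have h2 : 0 < CL⁻¹ * ‖v‖ := mul_pos (inv_pos.mpr hCL0) (norm_pos_iff.mpr hv)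
    exact Real.sqrt_pos.mp (lt_of_lt_of_le h2 h1)
  have hqlow : ∀ t ∈ Set.Icc T₀ T₁, ∀ v : X, CL⁻¹ ^ 2 * ‖v‖ ^ 2 ≤ ⟪L t v, v⟫ := by
    intro t ht v
    rcases eq_or_ne v 0 with rfl | hv
    · simp
    · have h1 := hlow t ht v
      have h2 : 0 < ⟪L t v, v⟫ := hqpos t ht v hv
      have h3 := mul_self_le_mul_self (by positivity) h1
      rw [Real.mul_self_sqrt h2.le] at h3
      calc CL⁻¹ ^ 2 * ‖v‖ ^ 2 = (CL⁻¹ * ‖v‖) * (CL⁻¹ * ‖v‖) := by ring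
        _ ≤ _ := h3
  have habs : ∀ (A : X →L[ℝ] X) (v : X), |⟪A v, v⟫| ≤ ‖A‖ * ‖v‖ ^ 2 := by
    intro A v
    calc |⟪A v, v⟫| ≤ ‖A v‖ * ‖v‖ := abs_real_inner_le_norm _ _
      _ ≤ ‖A‖ * ‖v‖ * ‖v‖ := mul_le_mul_of_nonneg_right (A.le_opNorm v) (norm_nonneg v)
      _ = ‖A‖ * ‖v‖ ^ 2 := by ring
  have hLcont : ContinuousOn L (Set.Icc T₀ T₁) := fun t ht =>
    (hderiv t ht).continuousAt.continuousWithinAt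
  have hcontiv : ∀ v : X, Continuous (fun A : X →L[ℝ] X => ⟪A v, v⟫) := fun v =>
    ((ContinuousLinearMap.apply ℝ X v).continuous).inner continuous_const
  have hqcont : ∀ v : X, ContinuousOn (fun τ => ⟪L τ v, v⟫) (Set.Icc T₀ T₁) := fun v =>
    (hcontiv v).comp_continuousOn hLcont
  have hq'cont : ∀ v : X, ContinuousOn (fun τ => ⟪L' τ v, v⟫) (Set.Icc T₀ T₁) := fun v =>
    (hcontiv v).comp_continuousOn hderivCont
  have hqderiv : ∀ (v : X), ∀ t ∈ Set.Icc T₀ T₁,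
      HasDerivAt (fun τ => ⟪L τ v, v⟫) ⟪L' t v, v⟫ t := by
    intro v t ht
    have h1 : HasDerivAt (fun τ => L τ v) (L' t v) t :=
      (ContinuousLinearMap.apply ℝ X v).hasFDerivAt.comp_hasDerivAt t (hderiv t ht)
    simpa using h1.inner ℝ (hasDerivAt_const t v)
  -- each element of the sup-set is at most CL²‖L' t‖
  have hmemle : ∀ t ∈ Set.Icc T₀ T₁, ∀ r ∈
      {r : ℝ | ∃ v : X, v ≠ 0 ∧ r = ⟪L' t v, v⟫ / ⟪L t v, v⟫}, r ≤ CL ^ 2 * ‖L' t‖ := by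
    rintro t ht r ⟨v, hv, rfl⟩
    have hd : CL⁻¹ ^ 2 * ‖v‖ ^ 2 ≤ ⟪L t v, v⟫ := hqlow t ht v
    have hn : (0:ℝ) < ‖v‖ := norm_pos_iff.mpr hv
    have hdpos : 0 < CL⁻¹ ^ 2 * ‖v‖ ^ 2 := by positivity
    calc ⟪L' t v, v⟫ / ⟪L t v, v⟫ ≤ |⟪L' t v, v⟫| / ⟪L t v, v⟫ :=
          div_le_div₀ (abs_nonneg _) (le_abs_self _) (lt_of_lt_of_le hdpos hd) le_rfl
      _ ≤ (‖L' t‖ * ‖v‖ ^ 2) / (CL⁻¹ ^ 2 * ‖v‖ ^ 2) :=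
          div_le_div₀ (by positivity) (habs _ _) hdpos hd
      _ = CL ^ 2 * ‖L' t‖ := by
          field_simp
  -- split on triviality of X
  rcases subsingleton_or_nontrivial X with hX | hX
  · -- trivial space: everything degenerates
    have hgz : ∀ τ : ℝ, g τ = 0 := by
      intro τ
      have : {r : ℝ | ∃ v : X, v ≠ 0 ∧ r = ⟪L' τ v, v⟫ / ⟪L τ v, v⟫} = ∅ := by
        ext r
        simp only [Set.mem_setOf_eq, Set.mem_empty_iff_false, iff_false, not_exists]
        intro v hv
        exact hv.1 (Subsingleton.elim v 0)
      show sSup {r : ℝ | ∃ v : X, v ≠ 0 ∧ r = ⟪L' τ v, v⟫ / ⟪L τ v, v⟫} = 0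
      rw [this, Real.sSup_empty]
    have hint0 : ∫ τ in t₀..t₁, g τ = 0 := by
      simp only [hgz, intervalIntegral.integral_zero]
    have hl : lProdSet L t₀ t₁ = ∅ := by
      ext x
      simp only [lProdSet, Set.mem_setOf_eq, Set.mem_empty_iff_false, iff_false, not_exists]
      rintro j₀ s v ⟨hj₀, _, _, _, hvne, _⟩
      exact hvne 1 le_rfl hj₀ (Subsingleton.elim _ _)
    constructor
    · rw [hl, Real.sSup_empty]
      exact (Real.exp_pos _).le
    · apply Real.exp_le_exp.mpr
      rw [hint0, mul_zero]
      have hI : 0 ≤ ∫ τ in t₀..t₁, ‖L' τ‖ :=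
        intervalIntegral.integral_nonneg h01 (fun u _ => norm_nonneg _)
      have : (0:ℝ) ≤ (1/2) * CL ^ 2 := by positivity
      nlinarith
  · -- nontrivial space
    have hsub : Set.Icc t₀ t₁ ⊆ Set.Icc T₀ T₁ := Set.Icc_subset_Icc hT₀ hT₁
    obtain ⟨v₀, hv₀⟩ := exists_ne (0 : X)
    have hSne : ∀ τ : ℝ,
        Set.Nonempty {r : ℝ | ∃ v : X, v ≠ 0 ∧ r = ⟪L' τ v, v⟫ / ⟪L τ v, v⟫} :=
      fun τ => ⟨_, v₀, hv₀, rfl⟩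
    have hbdd : ∀ t ∈ Set.Icc T₀ T₁,
        BddAbove {r : ℝ | ∃ v : X, v ≠ 0 ∧ r = ⟪L' t v, v⟫ / ⟪L t v, v⟫} :=
      fun t ht => ⟨CL ^ 2 * ‖L' t‖, fun r hr => hmemle t ht r hr⟩
    have hgle : ∀ t ∈ Set.Icc T₀ T₁, g t ≤ CL ^ 2 * ‖L' t‖ :=
      fun t ht => csSup_le (hSne t) (hmemle t ht)
    have hglemem : ∀ t ∈ Set.Icc T₀ T₁, ∀ v : X, v ≠ 0 →
        ⟪L' t v, v⟫ / ⟪L t v, v⟫ ≤ g t :=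
      fun t ht v hv => le_csSup (hbdd t ht) ⟨v, hv, rfl⟩
    -- key two-point estimate
    have hkey : ∀ τ ∈ Set.Icc T₀ T₁, ∀ σ ∈ Set.Icc T₀ T₁,
        g σ ≤ g τ + (CL ^ 2 * ‖L' σ - L' τ‖ + CL ^ 2 * CL ^ 2 * ‖L' τ‖ * ‖L σ - L τ‖) := by
      intro τ hτ σ hσ
      apply csSup_le (hSne σ)
      rintro r ⟨v, hv, rfl⟩
      have hn : (0:ℝ) < ‖v‖ := norm_pos_iff.mpr hv
      have he : (0:ℝ) < CL⁻¹ ^ 2 * ‖v‖ ^ 2 := by positivity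
      have hbσ := hqlow σ hσ v
      have hbτ := hqlow τ hτ v
      have hac : |⟪L' σ v, v⟫ - ⟪L' τ v, v⟫| ≤ ‖L' σ - L' τ‖ * ‖v‖ ^ 2 := by
        have h := habs (L' σ - L' τ) v
        simpa [inner_sub_left, ContinuousLinearMap.sub_apply] using h
      have hc := habs (L' τ) v
      have hdb : |⟪L τ v, v⟫ - ⟪L σ v, v⟫| ≤ ‖L σ - L τ‖ * ‖v‖ ^ 2 := by
        have h := habs (L σ - L τ) v
        rw [abs_sub_comm]
        simpa [inner_sub_left, ContinuousLinearMap.sub_apply] using h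
      have h2 := ratio_sub_le he hbσ hbτ hac hc hdb
      have h3 : (‖L' σ - L' τ‖ * ‖v‖ ^ 2) / (CL⁻¹ ^ 2 * ‖v‖ ^ 2)
          + (‖L' τ‖ * ‖v‖ ^ 2) * (‖L σ - L τ‖ * ‖v‖ ^ 2)
            / ((CL⁻¹ ^ 2 * ‖v‖ ^ 2) * (CL⁻¹ ^ 2 * ‖v‖ ^ 2))
          = CL ^ 2 * ‖L' σ - L' τ‖ + CL ^ 2 * CL ^ 2 * ‖L' τ‖ * ‖L σ - L τ‖ := by
        field_simp
      rw [h3] at h2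
      have h1 := hglemem τ hτ v hv
      linarith
    -- continuity of g on [T₀,T₁]
    have hgcont : ContinuousOn g (Set.Icc T₀ T₁) := by
      intro τ hτ
      have hup : ∀ σ ∈ Set.Icc T₀ T₁,
          g σ ≤ g τ + (CL ^ 2 * ‖L' σ - L' τ‖ + CL ^ 2 * CL ^ 2 * ‖L' τ‖ * ‖L σ - L τ‖) :=
        fun σ hσ => hkey τ hτ σ hσ
      have hlo : ∀ σ ∈ Set.Icc T₀ T₁,
          g τ - (CL ^ 2 * ‖L' τ - L' σ‖ + CL ^ 2 * CL ^ 2 * ‖L' σ‖ * ‖L τ - L σ‖) ≤ g σ := by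
        intro σ hσ
        have := hkey σ hσ τ hτ
        linarith
      have hupc : Filter.Tendsto
          (fun σ => g τ + (CL ^ 2 * ‖L' σ - L' τ‖ + CL ^ 2 * CL ^ 2 * ‖L' τ‖ * ‖L σ - L τ‖))
          (nhdsWithin τ (Set.Icc T₀ T₁)) (nhds (g τ)) := by
        have hc : ContinuousWithinAt
            (fun σ => g τ + (CL ^ 2 * ‖L' σ - L' τ‖ + CL ^ 2 * CL ^ 2 * ‖L' τ‖ * ‖L σ - L τ‖))
            (Set.Icc T₀ T₁) τ :=
          continuousWithinAt_const.add
            ((continuousWithinAt_const.mul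
              (((hderivCont τ hτ).sub continuousWithinAt_const).norm)).add
             (continuousWithinAt_const.mul
              (((hLcont τ hτ).sub continuousWithinAt_const).norm)))
        have h4 : Filter.Tendsto
            (fun σ => g τ + (CL ^ 2 * ‖L' σ - L' τ‖ + CL ^ 2 * CL ^ 2 * ‖L' τ‖ * ‖L σ - L τ‖))
            (nhdsWithin τ (Set.Icc T₀ T₁))
            (nhds (g τ + (CL ^ 2 * ‖L' τ - L' τ‖ + CL ^ 2 * CL ^ 2 * ‖L' τ‖ * ‖L τ - L τ‖))) := hc
        simpa using h4
      have hloc : Filter.Tendsto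
          (fun σ => g τ - (CL ^ 2 * ‖L' τ - L' σ‖ + CL ^ 2 * CL ^ 2 * ‖L' σ‖ * ‖L τ - L σ‖))
          (nhdsWithin τ (Set.Icc T₀ T₁)) (nhds (g τ)) := by
        have hc : ContinuousWithinAt
            (fun σ => g τ - (CL ^ 2 * ‖L' τ - L' σ‖ + CL ^ 2 * CL ^ 2 * ‖L' σ‖ * ‖L τ - L σ‖))
            (Set.Icc T₀ T₁) τ :=
          continuousWithinAt_const.sub
            ((continuousWithinAt_const.mul
              ((continuousWithinAt_const.sub (hderivCont τ hτ)).norm)).add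
             ((continuousWithinAt_const.mul (hderivCont τ hτ).norm).mul
              ((continuousWithinAt_const.sub (hLcont τ hτ)).norm)))
        have h4 : Filter.Tendsto
            (fun σ => g τ - (CL ^ 2 * ‖L' τ - L' σ‖ + CL ^ 2 * CL ^ 2 * ‖L' σ‖ * ‖L τ - L σ‖))
            (nhdsWithin τ (Set.Icc T₀ T₁))
            (nhds (g τ - (CL ^ 2 * ‖L' τ - L' τ‖ + CL ^ 2 * CL ^ 2 * ‖L' τ‖ * ‖L τ - L τ‖))) := hc
        simpa using h4
      exact tendsto_of_tendsto_of_tendsto_of_le_of_le' hloc hupc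
        (eventually_nhdsWithin_of_forall hlo) (eventually_nhdsWithin_of_forall hup)
    -- interval integrability of g
    have hgint : ∀ a b : ℝ, a ∈ Set.Icc t₀ t₁ → b ∈ Set.Icc t₀ t₁ →
        IntervalIntegrable g MeasureTheory.volume a b := by
      intro a b ha hb
      apply ContinuousOn.intervalIntegrable
      apply hgcont.mono
      exact fun x hx => hsub (Set.uIcc_subset_Icc ha hb hx)
    -- the per-interval estimate
    have hmain : ∀ (v : X), v ≠ 0 → ∀ a b : ℝ, a ∈ Set.Icc t₀ t₁ → b ∈ Set.Icc t₀ t₁ → a ≤ b →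
        Real.sqrt ⟪L b v, v⟫ / Real.sqrt ⟪L a v, v⟫ ≤
          Real.exp ((1/2) * ∫ τ in a..b, g τ) := by
      intro v hv a b ha hb hab
      have hIab : Set.Icc a b ⊆ Set.Icc T₀ T₁ :=
        fun x hx => hsub ⟨le_trans ha.1 hx.1, le_trans hx.2 hb.2⟩
      have huIcc : Set.uIcc a b = Set.Icc a b := Set.uIcc_of_le hab
      have hqpos' : ∀ τ ∈ Set.Icc a b, 0 < ⟪L τ v, v⟫ := fun τ hτ => hqpos τ (hIab hτ) v hv
      have hd : ∀ τ ∈ Set.uIcc a b,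
          HasDerivAt (fun σ => Real.log ⟪L σ v, v⟫) (⟪L' τ v, v⟫ / ⟪L τ v, v⟫) τ := by
        intro τ hτ
        rw [huIcc] at hτ
        exact (hqderiv v τ (hIab hτ)).log (ne_of_gt (hqpos' τ hτ))
      have hcontratio : ContinuousOn (fun τ => ⟪L' τ v, v⟫ / ⟪L τ v, v⟫) (Set.uIcc a b) := by
        rw [huIcc]
        exact ContinuousOn.div ((hq'cont v).mono hIab) ((hqcont v).mono hIab)
          (fun τ hτ => ne_of_gt (hqpos' τ hτ))
      have hint1 := hcontratio.intervalIntegrable (μ := MeasureTheory.volume)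
      have heq := intervalIntegral.integral_eq_sub_of_hasDerivAt hd hint1
      have hle : ∫ τ in a..b, ⟪L' τ v, v⟫ / ⟪L τ v, v⟫ ≤ ∫ τ in a..b, g τ :=
        intervalIntegral.integral_mono_on hab hint1 (hgint a b ha hb)
          (fun τ hτ => hglemem τ (hIab hτ) v hv)
      have hqa : 0 < ⟪L a v, v⟫ := hqpos' a ⟨le_rfl, hab⟩
      have hqb : 0 < ⟪L b v, v⟫ := hqpos' b ⟨hab, le_rfl⟩
      have h1 : Real.sqrt ⟪L b v, v⟫ / Real.sqrt ⟪L a v, v⟫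
          = Real.exp ((1/2) * (Real.log ⟪L b v, v⟫ - Real.log ⟪L a v, v⟫)) := by
        rw [← Real.exp_log (Real.sqrt_pos.mpr hqb), ← Real.exp_log (Real.sqrt_pos.mpr hqa),
          ← Real.exp_sub, Real.log_sqrt hqb.le, Real.log_sqrt hqa.le]
        congr 1
        ring
      rw [h1]
      apply Real.exp_le_exp.mpr
      rw [← heq]
      exact mul_le_mul_of_nonneg_left hle (by norm_num)
    constructor
    · -- first inequality
      apply Real.sSup_le _ (Real.exp_pos _).le
      rintro x ⟨j₀, s, v, hj₀, hs0, hs1, hmono, hvne, rfl⟩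
      have hstep : ∀ i j : ℕ, i ≤ j → j ≤ j₀ → s i ≤ s j := by
        intro i j hij
        induction j, hij using Nat.le_induction with
        | base => intro _; exact le_rfl
        | succ n hn ih =>
          intro hj
          exact le_trans (ih (by omega)) (hmono n (by omega))
      have hsmem : ∀ j : ℕ, j ≤ j₀ → s j ∈ Set.Icc t₀ t₁ := fun j hj =>
        ⟨hs0 ▸ hstep 0 j (Nat.zero_le _) hj, hs1 ▸ hstep j j₀ hj le_rfl⟩
      calc (∏ j ∈ Finset.Icc 1 j₀,
              Real.sqrt ⟪L (s j) (v j), v j⟫ / Real.sqrt ⟪L (s (j - 1)) (v j), v j⟫)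
          ≤ ∏ j ∈ Finset.Icc 1 j₀, Real.exp ((1/2) * ∫ τ in s (j - 1)..s j, g τ) := by
            apply Finset.prod_le_prod
            · intro j _
              positivity
            · intro j hj
              rw [Finset.mem_Icc] at hj
              have hpred : j - 1 + 1 = j := Nat.succ_pred_eq_of_pos hj.1
              have hab : s (j - 1) ≤ s j := by
                have h := hmono (j - 1) (by omega)
                rwa [hpred] at h
              exact hmain (v j) (hvne j hj.1 hj.2) (s (j - 1)) (s j)
                (hsmem _ (by omega)) (hsmem _ hj.2) hab
        _ = Real.exp ((1/2) * ∫ τ in t₀..t₁, g τ) := by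
            rw [← Real.exp_sum, ← Finset.mul_sum]
            congr 2
            have hint : ∀ k < j₀, IntervalIntegrable g MeasureTheory.volume (s k) (s (k + 1)) :=
              fun k hk => hgint _ _ (hsmem k hk.le) (hsmem (k + 1) hk)
            have hadj := intervalIntegral.sum_integral_adjacent_intervals (a := s) (n := j₀) hint
            rw [hs0, hs1] at hadj
            rw [← hadj, ← Finset.Ico_add_one_right_eq_Icc, Finset.sum_Ico_eq_sum_range]
            simp only [Nat.add_sub_cancel_left]
            apply Finset.sum_congr rfl
            intro i _
            have h2 : 1 + i = i + 1 := by omega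
            rw [h2]
    · -- second inequality
      apply Real.exp_le_exp.mpr
      have hint1 : IntervalIntegrable g MeasureTheory.volume t₀ t₁ :=
        hgint t₀ t₁ ⟨le_rfl, h01⟩ ⟨h01, le_rfl⟩
      have hint2 : IntervalIntegrable (fun τ => CL ^ 2 * ‖L' τ‖) MeasureTheory.volume t₀ t₁ := by
        apply ContinuousOn.intervalIntegrable
        apply ContinuousOn.mul continuousOn_const
        apply (hderivCont.norm).mono
        rw [Set.uIcc_of_le h01]
        exact hsub
      have hml := intervalIntegral.integral_mono_on h01 hint1 hint2
        (fun x hx => hgle x (hsub hx))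
      rw [intervalIntegral.integral_const_mul] at hml
      nlinarith [hml]
end

section
/- Let Y be a reflexive Banach space (e.g. a Hilbert space) continuously embedded in a Banach space Z, let Γ ⊂ Y be a nonempty, bounded, convex subset that is closed in Y, and let T: Γ → Γ be a map satisfying ‖T u − T v‖_Z ≤ θ ‖u − v‖_Z for all u, v ∈ Γ, where 0 ≤ θ < 1. Then T has a unique fixed point in Γ. -/
open NormedSpace Filter Bornology Metric Topology

set_option maxHeartbeats 1000000 in
/-- a map of a bounded closed convex set `Γ` of a reflexive Banach space `Y`
into itself which is a contraction with respect to the norm of a Banach space `Z` in which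
`Y` embeds continuously has a unique fixed point in `Γ`. -/
theorem stmt7 {Y Z : Type*}
    [NormedAddCommGroup Y] [NormedSpace ℝ Y] [CompleteSpace Y]
    [NormedAddCommGroup Z] [NormedSpace ℝ Z] [CompleteSpace Z]
    (hrefl : Function.Surjective (NormedSpace.inclusionInDoubleDual ℝ Y))
    (ι : Y →L[ℝ] Z) (hι : Function.Injective ι)
    (Γ : Set Y) (hne : Γ.Nonempty) (hbdd : Bornology.IsBounded Γ)
    (hconv : Convex ℝ Γ) (hclosed : IsClosed Γ)
    (T : Y → Y) (hmaps : Set.MapsTo T Γ Γ)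
    (θ : ℝ) (hθ0 : 0 ≤ θ) (hθ1 : θ < 1)
    (hcontr : ∀ u ∈ Γ, ∀ v ∈ Γ, ‖ι (T u) - ι (T v)‖ ≤ θ * ‖ι u - ι v‖) :
    ∃! u : Y, u ∈ Γ ∧ T u = u := by
  classical
  -- the canonical map into the double dual, viewed as valued in the weak-star dual
  set J : Y →L[ℝ] StrongDual ℝ (StrongDual ℝ Y) := inclusionInDoubleDual ℝ Y with hJ
  let j : Y → WeakDual ℝ (StrongDual ℝ Y) := fun y => J y
  -- the image of Γ is weak-star closed
  have hKclosed : IsClosed (j '' Γ) := by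
    rw [← isOpen_compl_iff]
    rw [isOpen_iff_mem_nhds]
    intro p hp
    obtain ⟨x, rfl⟩ := hrefl p
    by_cases hx : x ∈ Γ
    · exact absurd ⟨x, hx, rfl⟩ hp
    · obtain ⟨f, u, hfu, hux⟩ := geometric_hahn_banach_closed_point hconv hclosed hx
      have hopen : IsOpen {q : WeakDual ℝ (StrongDual ℝ Y) | u < q f} :=
        isOpen_lt continuous_const (WeakDual.eval_continuous f)
      refine Filter.mem_of_superset (hopen.mem_nhds ?_) ?_
      · exact hux
      · rintro q hq ⟨y, hy, rfl⟩
        have : (j y) f = f y := rfl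
        rw [Set.mem_setOf_eq, this] at hq
        exact absurd (hfu y hy) (not_lt.2 hq.le)
  -- the image of Γ is weak-star compact
  have hKcpt : IsCompact (j '' Γ) := by
    refine WeakDual.isCompact_of_bounded_of_closed ?_ hKclosed
    have : (StrongDual.toWeakDual ⁻¹' (j '' Γ) : Set (StrongDual ℝ (StrongDual ℝ Y))) = J '' Γ := by
      ext q; simp [j]; rfl
    change Bornology.IsBounded (StrongDual.toWeakDual ⁻¹' (j '' Γ) : Set (StrongDual ℝ (StrongDual ℝ Y)))
    rw [this]
    have hJl := ContinuousLinearMap.lipschitz (𝕜 := ℝ) (𝕜₂ := ℝ) (E := Y) (F := StrongDual ℝ (StrongDual ℝ Y)) J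
    exact hJl.isBounded_image hbdd
  -- Picard iterates
  let u : ℕ → Y := fun n => T^[n] hne.choose
  have huΓ : ∀ n, u n ∈ Γ := by
    intro n
    induction n with
    | zero => exact hne.choose_spec
    | succ n ih =>
      have : u (n+1) = T (u n) := Function.iterate_succ_apply' T n _
      rw [this]; exact hmaps ih
  have huS : ∀ n, u (n + 1) = T (u n) := fun n => Function.iterate_succ_apply' T n _
  -- geometric estimate
  have hgeom : ∀ n, ‖ι (u (n + 1)) - ι (u n)‖ ≤ ‖ι (u 1) - ι (u 0)‖ * θ ^ n := by
    intro n
    induction n with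
    | zero => simp
    | succ n ih =>
      calc ‖ι (u (n+1+1)) - ι (u (n+1))‖
          = ‖ι (T (u (n+1))) - ι (T (u n))‖ := by rw [huS (n+1), huS n]
        _ ≤ θ * ‖ι (u (n+1)) - ι (u n)‖ := hcontr _ (huΓ _) _ (huΓ _)
        _ ≤ θ * (‖ι (u 1) - ι (u 0)‖ * θ ^ n) := by
            exact mul_le_mul_of_nonneg_left ih hθ0
        _ = ‖ι (u 1) - ι (u 0)‖ * θ ^ (n + 1) := by ring
  -- the sequence ι (u n) is Cauchy, converging to some z in Z
  have hcauchy : CauchySeq (fun n => ι (u n)) := by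
    apply cauchySeq_of_le_geometric θ (‖ι (u 1) - ι (u 0)‖) hθ1
    intro n
    rw [dist_eq_norm, norm_sub_rev]
    exact hgeom n
  obtain ⟨z, hz⟩ := cauchySeq_tendsto_of_complete hcauchy
  -- get a weak-star cluster point in j '' Γ
  have hmaps' : Filter.map (fun n => j (u n)) atTop ≤ 𝓟 (j '' Γ) := by
    rw [Filter.le_principal_iff, Filter.mem_map]
    filter_upwards with n using ⟨u n, huΓ n, rfl⟩
  obtain ⟨p, hpK, hpcl⟩ := hKcpt.exists_mapClusterPt hmaps'
  obtain ⟨x, hxΓ, rfl⟩ := hpK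
  -- show ι x = z, using that the dual separates points
  have hιx : ι x = z := by
    rw [eq_iff_forall_dual_eq (𝕜 := ℝ)]
    intro g
    -- evaluation at g ∘ ι is weak-star continuous
    have hev : Continuous fun q : WeakDual ℝ (StrongDual ℝ Y) => q (g.comp ι) :=
      WeakDual.eval_continuous _
    have hcl2 : MapClusterPt ((j x) (g.comp ι)) atTop
        ((fun q : WeakDual ℝ (StrongDual ℝ Y) => q (g.comp ι)) ∘ fun n => j (u n)) :=
      hpcl.continuousAt_comp hev.continuousAt
    have heq : ((fun q : WeakDual ℝ (StrongDual ℝ Y) => q (g.comp ι)) ∘ fun n => j (u n))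
        = fun n => g (ι (u n)) := rfl
    rw [heq] at hcl2
    have htend : Tendsto (fun n => g (ι (u n))) atTop (𝓝 (g z)) :=
      (g.continuous.tendsto z).comp hz
    have : (j x) (g.comp ι) = g z := by
      have h1 : ClusterPt ((j x) (g.comp ι)) (𝓝 (g z)) :=
        hcl2.clusterPt.mono htend
      exact t2_iff_nhds.mp inferInstance h1
    exact this
  -- x is a fixed point
  have hTx : T x = x := by
    apply hι
    rw [hιx]
    -- ι (T x) is the limit of ι (u (n+1))
    have h1 : Tendsto (fun n => ι (u (n + 1))) atTop (𝓝 z) := hz.comp (tendsto_add_atTop_nat 1)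
    have h2 : Tendsto (fun n => ι (T x) - ι (u (n + 1))) atTop (𝓝 0) := by
      apply squeeze_zero_norm (a := fun n => θ * ‖ι x - ι (u n)‖)
      · intro n
        rw [huS n]
        exact hcontr _ hxΓ _ (huΓ n)
      · have : Tendsto (fun n => ι x - ι (u n)) atTop (𝓝 (ι x - z)) :=
          tendsto_const_nhds.sub hz
        simpa [hιx] using (this.norm.const_mul θ)
    have := h2.add h1
    simpa using this
  refine ⟨x, ⟨hxΓ, hTx⟩, ?_⟩
  rintro v ⟨hvΓ, hTv⟩
  -- uniqueness
  have h := hcontr v hvΓ x hxΓ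
  rw [hTv, hTx] at h
  have : ‖ι v - ι x‖ = 0 := by
    by_contra hne0
    have hpos : 0 < ‖ι v - ι x‖ := lt_of_le_of_ne (norm_nonneg _) (Ne.symm hne0)
    nlinarith
  exact hι (sub_eq_zero.mp (norm_eq_zero.mp this))
end

section
/- Let Y ↪ Z be a continuous embedding of Banach spaces and T a linear operator that is bounded on both Y and Z, with ‖T‖_{L(Z)} ≤ θ for some θ < 1, and suppose there is K ≥ 0 with ‖Tu‖_Y ≤ θ‖u‖_Y + K‖u‖_Z for all u ∈ Y. Then for every l ≥ 0 and u ∈ Y one has ‖T^l u‖_Y ≤ θ^l ‖u‖_Y + l θ^{l−1} K C ‖u‖_Y (where C is the embedding constant ‖u‖_Z ≤ C‖u‖_Y), the series Σ_{l≥0} T^l u converges in Y, and I − T is invertible on Y with ‖(I−T)^{-1}‖_{L(Y)} ≤ (1−θ)^{-1} + KC(1−θ)^{-2}. -/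
open Filter Finset

private lemma neumann_aux {A : Type*} [NormedRing A] [CompleteSpace A]
    {x : A} (hsum : Summable fun n : ℕ => x ^ n)
    (hpow : Filter.Tendsto (fun n : ℕ => x ^ n) Filter.atTop (nhds 0)) :
    (∑' i : ℕ, x ^ i) * (1 - x) = 1 ∧ (1 - x) * (∑' i : ℕ, x ^ i) = 1 := by
  constructor
  · have h1 := hsum.hasSum.mul_right (1 - x)
    refine tendsto_nhds_unique h1.tendsto_sum_nat ?_
    have h2 : Tendsto (fun n : ℕ => 1 - x ^ n) atTop (nhds 1) := by
      simpa using tendsto_const_nhds.sub hpow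
    convert← h2
    rw [← geom_sum_mul_neg, Finset.sum_mul]
  · have h1 := hsum.hasSum.mul_left (1 - x)
    refine tendsto_nhds_unique h1.tendsto_sum_nat ?_
    have h2 : Tendsto (fun n : ℕ => 1 - x ^ n) atTop (nhds 1) := by
      simpa using tendsto_const_nhds.sub hpow
    convert← h2
    rw [← mul_neg_geom_sum, Finset.mul_sum]

/-- a linear operator which is a contraction in a weak norm and tame in a strong
norm has uniformly controlled powers, summable Neumann series, and `I − T` is invertible with
quantitative bound on the inverse. -/
theorem stmt8 {Y Z : Type*}
    [NormedAddCommGroup Y] [NormedSpace ℝ Y] [CompleteSpace Y]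
    [NormedAddCommGroup Z] [NormedSpace ℝ Z] [CompleteSpace Z]
    (ι : Y →L[ℝ] Z) (hι : Function.Injective ι)
    (C : ℝ) (hC : 0 ≤ C) (hemb : ∀ u : Y, ‖ι u‖ ≤ C * ‖u‖)
    (TY : Y →L[ℝ] Y) (TZ : Z →L[ℝ] Z) (hcomm : ∀ u : Y, ι (TY u) = TZ (ι u))
    (θ K : ℝ) (hθ : θ < 1) (hTZ : ‖TZ‖ ≤ θ) (hK : 0 ≤ K)
    (htame : ∀ u : Y, ‖TY u‖ ≤ θ * ‖u‖ + K * ‖ι u‖) :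
    (∀ (n : ℕ) (u : Y), ‖(TY ^ n) u‖ ≤ θ ^ n * ‖u‖ + n * θ ^ (n - 1) * K * C * ‖u‖) ∧
    (∀ u : Y, Summable fun n : ℕ => (TY ^ n) u) ∧
    (∃ S : Y →L[ℝ] Y, S * (1 - TY) = 1 ∧ (1 - TY) * S = 1 ∧
      ‖S‖ ≤ (1 - θ)⁻¹ + K * C / (1 - θ) ^ 2) := by
  have hθ0 : 0 ≤ θ := le_trans (norm_nonneg TZ) hTZ
  -- commutation of powers
  have hcommn : ∀ (n : ℕ) (u : Y), ι ((TY ^ n) u) = (TZ ^ n) (ι u) := by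
    intro n
    induction n with
    | zero => intro u; simp
    | succ m ih =>
      intro u
      rw [pow_succ', pow_succ']
      simp only [ContinuousLinearMap.mul_apply]
      rw [hcomm, ih]
  -- weak norm bound on powers
  have hweak : ∀ (n : ℕ) (u : Y), ‖ι ((TY ^ n) u)‖ ≤ θ ^ n * C * ‖u‖ := by
    intro n u
    rw [hcommn]
    calc ‖(TZ ^ n) (ι u)‖ ≤ ‖TZ ^ n‖ * ‖ι u‖ := (TZ ^ n).le_opNorm _
      _ ≤ θ ^ n * (C * ‖u‖) := by
          apply mul_le_mul _ (hemb u) (norm_nonneg _) (pow_nonneg hθ0 n)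
          rcases n with _ | p
          · simp only [pow_zero]; exact ContinuousLinearMap.norm_id_le
          · calc ‖TZ ^ (p + 1)‖ ≤ ‖TZ‖ ^ (p + 1) := norm_pow_le' _ p.succ_pos
              _ ≤ θ ^ (p + 1) := pow_le_pow_left₀ (norm_nonneg _) hTZ _
      _ = θ ^ n * C * ‖u‖ := by ring
  -- main power bound
  have hmain : ∀ (n : ℕ) (u : Y),
      ‖(TY ^ n) u‖ ≤ θ ^ n * ‖u‖ + n * θ ^ (n - 1) * K * C * ‖u‖ := by
    intro n
    induction n with
    | zero => intro u; simp
    | succ m ih =>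
      intro u
      have h1 : ‖(TY ^ (m + 1)) u‖ ≤ θ * ‖(TY ^ m) u‖ + K * ‖ι ((TY ^ m) u)‖ := by
        rw [pow_succ']
        simpa using htame ((TY ^ m) u)
      have h2 := ih u
      have h3 := hweak m u
      have h4 : θ * (↑m * θ ^ (m - 1) * K * C * ‖u‖) ≤ ↑m * θ ^ m * K * C * ‖u‖ := by
        rcases m with _ | p
        · simp
        · apply le_of_eq
          simp only [Nat.add_sub_cancel]
          rw [pow_succ]
          ring
      have hnn := norm_nonneg ((TY ^ m) u)
      have h5 : θ * ‖(TY ^ m) u‖ ≤ θ * (θ ^ m * ‖u‖ + ↑m * θ ^ (m - 1) * K * C * ‖u‖) :=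
        mul_le_mul_of_nonneg_left h2 hθ0
      have h6 : K * ‖ι ((TY ^ m) u)‖ ≤ K * (θ ^ m * C * ‖u‖) :=
        mul_le_mul_of_nonneg_left h3 hK
      have hcast : ((m + 1 : ℕ) : ℝ) = (m : ℝ) + 1 := by push_cast; ring
      calc ‖(TY ^ (m + 1)) u‖
          ≤ θ * ‖(TY ^ m) u‖ + K * ‖ι ((TY ^ m) u)‖ := h1
        _ ≤ θ * (θ ^ m * ‖u‖ + ↑m * θ ^ (m - 1) * K * C * ‖u‖) + K * (θ ^ m * C * ‖u‖) := by
            linarith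
        _ ≤ θ ^ (m + 1) * ‖u‖ + (↑(m + 1) : ℝ) * θ ^ (m + 1 - 1) * K * C * ‖u‖ := by
            simp only [Nat.add_sub_cancel, hcast]
            have : θ * (θ ^ m * ‖u‖) = θ ^ (m + 1) * ‖u‖ := by ring
            nlinarith [h4]
        _ = θ ^ (m + 1) * ‖u‖ + ↑(m + 1) * θ ^ (m + 1 - 1) * K * C * ‖u‖ := rfl
  -- operator norm bound
  have hop : ∀ n : ℕ, ‖TY ^ n‖ ≤ θ ^ n + ↑n * θ ^ (n - 1) * K * C := by
    intro n
    apply ContinuousLinearMap.opNorm_le_bound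
    · positivity
    · intro u
      calc ‖(TY ^ n) u‖ ≤ θ ^ n * ‖u‖ + ↑n * θ ^ (n - 1) * K * C * ‖u‖ := hmain n u
        _ = (θ ^ n + ↑n * θ ^ (n - 1) * K * C) * ‖u‖ := by ring
  -- summability of the majorant
  have h1θ : (0:ℝ) < 1 - θ := by linarith
  have hgeo : HasSum (fun n : ℕ => θ ^ n) (1 - θ)⁻¹ := hasSum_geometric_of_lt_one hθ0 hθ
  have habs : ‖θ‖ < 1 := by rw [Real.norm_eq_abs, abs_of_nonneg hθ0]; exact hθ
  have hderiv : HasSum (fun n : ℕ => (n : ℝ) * θ ^ (n - 1)) (1 / (1 - θ) ^ 2) := by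
    have hA : HasSum (fun n : ℕ => (n : ℝ) * θ ^ n) (θ / (1 - θ) ^ 2) :=
      hasSum_coe_mul_geometric_of_norm_lt_one habs
    have hB : HasSum (fun n : ℕ => ((n : ℝ) + 1) * θ ^ n) (θ / (1 - θ) ^ 2 + (1 - θ)⁻¹) := by
      have := hA.add hgeo
      convert this using 2 with n
      ring
    have hshift : HasSum (fun n : ℕ => ((n + 1 : ℕ) : ℝ) * θ ^ ((n + 1) - 1))
        (θ / (1 - θ) ^ 2 + (1 - θ)⁻¹) := by
      convert hB using 2 with n
      push_cast
      simp
    have := (hasSum_nat_add_iff (f := fun n : ℕ => (n : ℝ) * θ ^ (n - 1)) 1).mp hshift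
    simp only [Finset.range_one, Finset.sum_singleton, Nat.cast_zero, zero_mul, add_zero] at this
    convert this using 1
    · rfl
    field_simp [h1θ.ne']
    ring
  have hmaj : HasSum (fun n : ℕ => θ ^ n + ↑n * θ ^ (n - 1) * K * C)
      ((1 - θ)⁻¹ + K * C / (1 - θ) ^ 2) := by
    have := hgeo.add ((hderiv.mul_right (K * C)))
    convert this using 2 with n
    · ring
    · field_simp
  -- summability of powers in the operator algebra
  have hsum : Summable fun n : ℕ => TY ^ n := by
    apply Summable.of_norm_bounded hmaj.summable hop
  have hpow0 : Tendsto (fun n : ℕ => TY ^ n) atTop (nhds 0) := by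
    have hmaj0 : Tendsto (fun n : ℕ => θ ^ n + ↑n * θ ^ (n - 1) * K * C) atTop (nhds 0) :=
      hmaj.summable.tendsto_atTop_zero
    rw [tendsto_zero_iff_norm_tendsto_zero]
    apply squeeze_zero (fun n => norm_nonneg _) hop hmaj0
  obtain ⟨hL, hR⟩ := neumann_aux hsum hpow0
  refine ⟨hmain, ?_, ⟨∑' n : ℕ, TY ^ n, hL, hR, ?_⟩⟩
  · intro u
    have := hsum.map (ContinuousLinearMap.apply ℝ Y u) (ContinuousLinearMap.apply ℝ Y u).continuous
    exact this
  · exact tsum_of_norm_bounded hmaj hop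
end
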